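/- Let F be a distribution on [0,∞) and A a distribution on [0,∞) with 1-A(u) ~ a·(1-F(u)) as u → ∞ for some constant a > 0. If F is subexponential, then A is subexponential. -/

import Mathlib

open MeasureTheory Filter Set Topology

/-- `n`-fold convolution of a measure on `ℝ` (with `μ^{*0} = δ₀`). -/
noncomputable def convPow (μ : Measure ℝ) : ℕ → Measure ℝ
  | 0 => Measure.dirac 0
  | n + 1 => Measure.conv (convPow μ n) μ

/-- A distribution `μ` on `[0,∞)` is subexponential if
`(1 - F^{*n}(u))/(1 - F(u)) → n` for every `n ≥ 1`. -/
def Subexponential (μ : Measure ℝ) : Prop :=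
  ∀ n : ℕ, 1 ≤ n →
    Tendsto (fun u : ℝ =>
        ((convPow μ n) (Set.Ioi u)).toReal / (μ (Set.Ioi u)).toReal)
      atTop (nhds (n : ℝ))

/-!
Tail equivalence to a subexponential `F` is additive under convolution: if `ρ̄ ~ c₁ F̄` and
`σ̄ ~ c₂ F̄` then `(ρ ∗ σ)‾ ~ (c₁ + c₂) F̄`, so by induction the tail of `A^{*n}` is
`~ n a F̄ ~ n Ā`.

For additivity, split `{x + y > u}` according to whether `x ≤ t`, `y ≤ t`, or both summands
exceed `t`. For distributions on `[0, ∞)` the piece `x ≤ t` has mass between `ρ(Iic t) σ̄(u)`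
and `σ̄(u - t) ~ c₂ F̄(u)`, since a subexponential `F` is long-tailed: `F̄(u - t) ~ F̄(u)`;
symmetrically for `y ≤ t`. Beyond `t` the bounds `ρ̄ ≤ K₁ F̄` and `σ̄ ≤ K₂ F̄` bound the
`ρ ⊗ σ`-mass of the remaining region by `K₁ K₂` times its `F ⊗ F`-mass, which is at most
`(F ∗ F)‾(u) - 2 F(t) F̄(u) ≲ 2 F̄(t) F̄(u)`. Letting `t → ∞` squeezes the ratio to `c₁ + c₂`.
-/

section Convolution

variable {μ ρ σ F : Measure ℝ}

lemma MeasureTheory.Measure.conv_apply (ρ σ : Measure ℝ) {s : Set ℝ} (hs : MeasurableSet s) :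
    ρ.conv σ s = ρ.prod σ ((fun p : ℝ × ℝ => p.1 + p.2) ⁻¹' s) :=
  Measure.map_apply (by fun_prop) hs

lemma measure_Ici_zero_inter (hμ : μ (Iio 0) = 0) (s : Set ℝ) : μ (Ici 0 ∩ s) = μ s := by
  rw [← measure_sdiff_null (s := s) hμ]
  congr 1
  ext x
  simp [and_comm]

lemma measureReal_Icc_zero (hμ : μ (Iio 0) = 0) (t : ℝ) : μ.real (Icc 0 t) = μ.real (Iic t) := by
  rw [measureReal_def, measureReal_def, ← Ici_inter_Iic, measure_Ici_zero_inter hμ]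

lemma conv_Iio_zero_eq_zero [SFinite ρ] [SFinite σ] (hρ : ρ (Iio 0) = 0) (hσ : σ (Iio 0) = 0) :
    ρ.conv σ (Iio 0) = 0 := by
  rw [Measure.conv_apply ρ σ measurableSet_Iio]
  refine measure_mono_null (t := Iio 0 ×ˢ univ ∪ univ ×ˢ Iio 0) ?_
    (measure_union_null (by simp [Measure.prod_prod, hρ]) (by simp [Measure.prod_prod, hσ]))
  rintro ⟨x, y⟩ hxy
  by_contra h
  simp only [mem_preimage, mem_Iio, mem_union, mem_prod, mem_univ, and_true, true_and,
    not_or, not_lt] at hxy h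
  linarith

def bothLarge (t u : ℝ) : Set (ℝ × ℝ) := {p | t < p.1 ∧ t < p.2 ∧ u < p.1 + p.2}

lemma measurableSet_bothLarge (t u : ℝ) : MeasurableSet (bothLarge t u) :=
  (measurableSet_lt measurable_const measurable_fst).inter
    ((measurableSet_lt measurable_const measurable_snd).inter
      (measurableSet_lt measurable_const (measurable_fst.add measurable_snd)))

lemma prod_bothLarge_comm [SFinite ρ] [SFinite σ] (t u : ℝ) :
    ρ.prod σ (bothLarge t u) = σ.prod ρ (bothLarge t u) := by
  rw [← Measure.prod_swap, Measure.map_apply measurable_swap (measurableSet_bothLarge t u)]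
  congr 1
  ext p
  simp only [bothLarge, mem_preimage, mem_ofPred_eq, Prod.fst_swap, Prod.snd_swap, add_comm]
  tauto

lemma measureReal_prod_bothLarge_le_mul [IsFiniteMeasure ρ] [IsFiniteMeasure σ]
    [IsFiniteMeasure F] {t K : ℝ} (hK : 0 ≤ K)
    (hρF : ∀ z, t ≤ z → ρ.real (Ioi z) ≤ K * F.real (Ioi z)) (u : ℝ) :
    (ρ.prod σ).real (bothLarge t u) ≤ K * (F.prod σ).real (bothLarge t u) := by
  have hslice : ∀ y, ρ ((fun x => (x, y)) ⁻¹' bothLarge t u)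
      ≤ ENNReal.ofReal K * F ((fun x => (x, y)) ⁻¹' bothLarge t u) := by
    intro y
    by_cases hy : t < y
    · have hIoi : (fun x => (x, y)) ⁻¹' bothLarge t u = Ioi (max t (u - y)) := by
        ext x
        simp [bothLarge, hy, sub_lt_iff_lt_add]
      rw [hIoi, ← ofReal_measureReal, ← ofReal_measureReal, ← ENNReal.ofReal_mul hK]
      exact ENNReal.ofReal_le_ofReal (hρF _ (le_max_left _ _))
    · have hempty : (fun x => (x, y)) ⁻¹' bothLarge t u = ∅ := by
        ext x
        simp [bothLarge, hy]
      simp [hempty]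
  have hprod : ρ.prod σ (bothLarge t u) ≤ ENNReal.ofReal K * F.prod σ (bothLarge t u) := by
    rw [Measure.prod_apply_symm (measurableSet_bothLarge t u),
      Measure.prod_apply_symm (measurableSet_bothLarge t u),
      ← lintegral_const_mul' _ _ ENNReal.ofReal_ne_top]
    exact lintegral_mono hslice
  have := ENNReal.toReal_mono (by finiteness) hprod
  rwa [ENNReal.toReal_mul, ENNReal.toReal_ofReal hK] at this

lemma measureReal_conv_Ioi (ρ σ : Measure ℝ) (u : ℝ) :
    (ρ.conv σ).real (Ioi u) = (ρ.prod σ).real {p | u < p.1 + p.2} := by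
  rw [measureReal_def, Measure.conv_apply ρ σ measurableSet_Ioi]
  rfl

lemma measureReal_conv_Ioi_le [IsProbabilityMeasure ρ] [IsProbabilityMeasure σ] (t u : ℝ) :
    (ρ.conv σ).real (Ioi u)
      ≤ σ.real (Ioi (u - t)) + ρ.real (Ioi (u - t)) + (ρ.prod σ).real (bothLarge t u) := by
  have hcover : {p : ℝ × ℝ | u < p.1 + p.2}
      ⊆ univ ×ˢ Ioi (u - t) ∪ Ioi (u - t) ×ˢ univ ∪ bothLarge t u := by
    rintro ⟨x, y⟩ (hxy : u < x + y)
    rcases le_or_gt x t with hx | hx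
    · exact Or.inl (Or.inl ⟨trivial, show u - t < y by linarith⟩)
    rcases le_or_gt y t with hy | hy
    · exact Or.inl (Or.inr ⟨show u - t < x by linarith, trivial⟩)
    exact Or.inr ⟨hx, hy, hxy⟩
  calc (ρ.conv σ).real (Ioi u)
      ≤ (ρ.prod σ).real (univ ×ˢ Ioi (u - t) ∪ Ioi (u - t) ×ˢ univ ∪ bothLarge t u) := by
        rw [measureReal_conv_Ioi]
        exact measureReal_mono hcover
    _ ≤ _ := by
        grw [measureReal_union_le, measureReal_union_le]
        simp [measureReal_prod_prod]

lemma measureReal_conv_Ioi_ge [IsFiniteMeasure ρ] [IsFiniteMeasure σ] (hρ : ρ (Iio 0) = 0)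
    (hσ : σ (Iio 0) = 0) {t u : ℝ} (htu : t < u) :
    ρ.real (Iic t) * σ.real (Ioi u) + ρ.real (Ioi u) * σ.real (Iic t)
      + (ρ.prod σ).real (bothLarge t u) ≤ (ρ.conv σ).real (Ioi u) := by
  rw [← measureReal_Icc_zero hρ, ← measureReal_Icc_zero hσ, ← measureReal_prod_prod,
    ← measureReal_prod_prod, ← measureReal_union, ← measureReal_union, measureReal_conv_Ioi]
  · refine measureReal_mono ?_
    rintro ⟨x, y⟩ h
    simp only [bothLarge, mem_union, mem_prod, mem_Icc, mem_Ioi, mem_ofPred_eq] at h ⊢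
    rcases h with (⟨⟨hx, -⟩, hy⟩ | ⟨hx, ⟨hy, -⟩⟩) | ⟨-, -, h⟩ <;> linarith
  · rw [Set.disjoint_union_left]
    constructor <;> rw [Set.disjoint_left] <;> rintro ⟨x, y⟩ h h' <;>
      simp only [bothLarge, mem_prod, mem_Icc, mem_Ioi, mem_ofPred_eq] at h h' <;> linarith
  · exact measurableSet_bothLarge t u
  · rw [Set.disjoint_left]
    rintro ⟨x, y⟩ h h'
    simp only [mem_prod, mem_Icc, mem_Ioi] at h h'
    linarith
  · exact measurableSet_Ioi.prod measurableSet_Icc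

lemma measureReal_conv_Ioi_ge_sub [IsFiniteMeasure ρ] [IsProbabilityMeasure σ]
    (hρ : ρ (Iio 0) = 0) (hσ : σ (Iio 0) = 0) {t u : ℝ} (htu : t ≤ u) :
    ρ.real (Ioi u) + ρ.real (Iic t) * σ.real (Ioi u) + ρ.real (Ioc t u) * σ.real (Ioi (u - t))
      ≤ (ρ.conv σ).real (Ioi u) := by
  have hσ0 : σ.real (Ici 0) = 1 := by
    rw [measureReal_def, ← inter_univ (Ici 0), measure_Ici_zero_inter hσ, measure_univ,
      ENNReal.toReal_one]
  rw [← mul_one (ρ.real (Ioi u)), ← hσ0, ← measureReal_Icc_zero hρ, ← measureReal_prod_prod,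
    ← measureReal_prod_prod, ← measureReal_prod_prod, ← measureReal_union, ← measureReal_union,
    measureReal_conv_Ioi]
  · refine measureReal_mono ?_
    rintro ⟨x, y⟩ h
    simp only [mem_union, mem_prod, mem_Icc, mem_Ici, mem_Ioi, mem_Ioc, mem_ofPred_eq] at h ⊢
    rcases h with (⟨hx, hy⟩ | ⟨⟨hx, -⟩, hy⟩) | ⟨⟨hx, -⟩, hy⟩ <;> linarith
  · rw [Set.disjoint_union_left]
    constructor <;> rw [Set.disjoint_left] <;> rintro ⟨x, y⟩ h h' <;>
      simp only [mem_prod, mem_Icc, mem_Ici, mem_Ioi, mem_Ioc] at h h' <;> linarith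
  · exact measurableSet_Ioc.prod measurableSet_Ioi
  · rw [Set.disjoint_left]
    rintro ⟨x, y⟩ h h'
    simp only [mem_prod, mem_Icc, mem_Ici, mem_Ioi] at h h'
    linarith
  · exact measurableSet_Icc.prod measurableSet_Ioi

lemma measureReal_conv_Ioi_le_of_tail_le [IsProbabilityMeasure ρ] [IsProbabilityMeasure σ]
    [IsProbabilityMeasure F] (hF : F (Iio 0) = 0) {t u K₁ K₂ : ℝ}
    (hK₁ : 0 ≤ K₁) (hK₂ : 0 ≤ K₂) (hρF : ∀ z, t ≤ z → ρ.real (Ioi z) ≤ K₁ * F.real (Ioi z))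
    (hσF : ∀ z, t ≤ z → σ.real (Ioi z) ≤ K₂ * F.real (Ioi z)) (htu : t < u) :
    (ρ.conv σ).real (Ioi u) ≤ σ.real (Ioi (u - t)) + ρ.real (Ioi (u - t))
      + K₁ * K₂ * ((F.conv F).real (Ioi u) - 2 * F.real (Iic t) * F.real (Ioi u)) := by
  have hmiddle : (ρ.prod σ).real (bothLarge t u) ≤ K₁ * K₂ * (F.prod F).real (bothLarge t u) :=
    calc (ρ.prod σ).real (bothLarge t u)
        ≤ K₁ * (F.prod σ).real (bothLarge t u) :=
          measureReal_prod_bothLarge_le_mul hK₁ hρF u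
      _ = K₁ * (σ.prod F).real (bothLarge t u) := by
          rw [measureReal_def, measureReal_def, prod_bothLarge_comm]
      _ ≤ K₁ * (K₂ * (F.prod F).real (bothLarge t u)) :=
          mul_le_mul_of_nonneg_left (measureReal_prod_bothLarge_le_mul hK₂ hσF u) hK₁
      _ = K₁ * K₂ * (F.prod F).real (bothLarge t u) := by ring
  have hFF := measureReal_conv_Ioi_ge hF hF htu
  have hFF' : K₁ * K₂ * (F.prod F).real (bothLarge t u)
      ≤ K₁ * K₂ * ((F.conv F).real (Ioi u) - 2 * F.real (Iic t) * F.real (Ioi u)) :=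
    mul_le_mul_of_nonneg_left (by linarith) (mul_nonneg hK₁ hK₂)
  linarith [measureReal_conv_Ioi_le (ρ := ρ) (σ := σ) t u]

end Convolution

instance isProbabilityMeasure_convPow (μ : Measure ℝ) [IsProbabilityMeasure μ] (n : ℕ) :
    IsProbabilityMeasure (convPow μ n) := by
  induction n with
  | zero => rw [convPow]; infer_instance
  | succ n ih => rw [convPow]; infer_instance

lemma convPow_one (μ : Measure ℝ) [SFinite μ] : convPow μ 1 = μ := by
  rw [convPow, convPow, Measure.dirac_zero_conv]

lemma convPow_Iio_zero_eq_zero (μ : Measure ℝ) [IsProbabilityMeasure μ] (hμ : μ (Iio 0) = 0)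
    (n : ℕ) :
    convPow μ n (Iio 0) = 0 := by
  induction n with
  | zero => simp [convPow]
  | succ n ih => rw [convPow]; exact conv_Iio_zero_eq_zero ih hμ

section Asymptotics

lemma tendsto_of_eventually_bounds {ι κ α : Type*} [LinearOrder α] [TopologicalSpace α]
    [OrderTopology α] {lt : Filter ι} [lt.NeBot] {lu : Filter κ} {f : κ → α} {L : α}
    {g h : ι → κ → α} {G H : ι → α} (hG : Tendsto G lt (𝓝 L)) (hH : Tendsto H lt (𝓝 L))
    (hg : ∀ᶠ t in lt, Tendsto (g t) lu (𝓝 (G t)) ∧ ∀ᶠ u in lu, g t u ≤ f u)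
    (hh : ∀ᶠ t in lt, Tendsto (h t) lu (𝓝 (H t)) ∧ ∀ᶠ u in lu, f u ≤ h t u) :
    Tendsto f lu (𝓝 L) := by
  refine tendsto_order.2 ⟨fun a ha => ?_, fun b hb => ?_⟩
  · obtain ⟨t, hGt, hgt, hgf⟩ := ((hG.eventually (lt_mem_nhds ha)).and hg).exists
    filter_upwards [hgt.eventually (lt_mem_nhds hGt), hgf] with u h₁ h₂ using h₁.trans_le h₂
  · obtain ⟨t, hHt, hht, hfh⟩ := ((hH.eventually (gt_mem_nhds hb)).and hh).exists
    filter_upwards [hht.eventually (gt_mem_nhds hHt), hfh] with u h₁ h₂ using h₂.trans_lt h₁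

lemma exists_eventually_forall_ge_le_mul_of_tendsto_div {f g : ℝ → ℝ} {c : ℝ}
    (hg : ∀ u, 0 < g u) (hfg : Tendsto (fun u => f u / g u) atTop (𝓝 c)) :
    ∃ K, 0 ≤ K ∧ ∀ᶠ t in atTop, ∀ z, t ≤ z → f z ≤ K * g z := by
  refine ⟨|c| + 1, by positivity, eventually_forall_ge_atTop.2 ?_⟩
  filter_upwards [hfg.eventually (gt_mem_nhds ((le_abs_self c).trans_lt (lt_add_one _)))]
    with z hz
  exact ((div_lt_iff₀ (hg z)).1 hz).le

lemma tendsto_comp_sub_div_of_tendsto_div {f g : ℝ → ℝ} {c t : ℝ} (hg : ∀ u, g u ≠ 0)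
    (hfg : Tendsto (fun u => f u / g u) atTop (𝓝 c))
    (hshift : Tendsto (fun u => g (u - t) / g u) atTop (𝓝 1)) :
    Tendsto (fun u => f (u - t) / g u) atTop (𝓝 c) := by
  have := (hfg.comp (tendsto_atTop_add_const_right atTop (-t) tendsto_id)).mul hshift
  rw [mul_one] at this
  refine this.congr fun u => ?_
  simp only [Function.comp_apply, id_eq, ← sub_eq_add_neg, div_mul_div_cancel₀ (hg _)]

lemma tendsto_measureReal_Iic_atTop (μ : Measure ℝ) [IsProbabilityMeasure μ] :
    Tendsto (fun x => μ.real (Iic x)) atTop (𝓝 1) := by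
  simpa [Function.comp_def, measureReal_def] using
    (ENNReal.tendsto_toReal (measure_ne_top μ univ)).comp (tendsto_measure_Iic_atTop μ)

lemma measureReal_Iic_eq_one_sub (μ : Measure ℝ) [IsProbabilityMeasure μ] (x : ℝ) :
    μ.real (Iic x) = 1 - μ.real (Ioi x) := by
  rw [← compl_Ioi, probReal_compl_eq_one_sub measurableSet_Ioi]

lemma tendsto_measureReal_Ioi_atTop (μ : Measure ℝ) [IsProbabilityMeasure μ] :
    Tendsto (fun x => μ.real (Ioi x)) atTop (𝓝 0) := by
  simpa [measureReal_Iic_eq_one_sub] using (tendsto_measureReal_Iic_atTop μ).const_sub 1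

variable {F : Measure ℝ} [IsProbabilityMeasure F]

lemma tendsto_measureReal_Ioi_sub_div (hF : F (Iio 0) = 0) (hFpos : ∀ u, F (Ioi u) ≠ 0)
    (hF2 : Tendsto (fun u => (F.conv F).real (Ioi u) / F.real (Ioi u)) atTop (𝓝 2))
    {t : ℝ} (ht : 0 ≤ t) :
    Tendsto (fun u => F.real (Ioi (u - t)) / F.real (Ioi u)) atTop (𝓝 1) := by
  have hpos : ∀ u, 0 < F.real (Ioi u) := fun u => ENNReal.toReal_pos (hFpos u) (measure_ne_top _ _)
  have hupper : Tendsto (fun u => ((F.conv F).real (Ioi u) / F.real (Ioi u) - 1 - F.real (Iic t))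
      / (F.real (Ioi t) - F.real (Ioi u))) atTop (𝓝 1) := by
    have := ((hF2.sub_const 1).sub_const (F.real (Iic t))).div
      (tendsto_const_nhds.sub (tendsto_measureReal_Ioi_atTop F)) (by simpa using (hpos t).ne')
    have hlim : (2 - 1 - F.real (Iic t)) / (F.real (Ioi t) - 0) = 1 := by
      rw [measureReal_Iic_eq_one_sub, sub_zero, div_eq_one_iff_eq (hpos t).ne']
      ring
    rwa [hlim] at this
  refine tendsto_of_tendsto_of_tendsto_of_le_of_le' tendsto_const_nhds hupper ?_ ?_
  · filter_upwards with u
    rw [one_le_div (hpos u)]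
    exact measureReal_mono (Ioi_subset_Ioi (by linarith))
  · filter_upwards [eventually_ge_atTop t,
      (tendsto_measureReal_Ioi_atTop F).eventually (gt_mem_nhds (hpos t))] with u htu hut
    have h := measureReal_conv_Ioi_ge_sub hF hF htu
    rw [← Ioi_sdiff_Ioi, measureReal_sdiff (Ioi_subset_Ioi htu) measurableSet_Ioi] at h
    rw [le_div_iff₀ (sub_pos.2 hut), div_mul_eq_mul_div, div_le_iff₀ (hpos u), sub_mul, sub_mul,
      div_mul_cancel₀ _ (hpos u).ne']
    linarith

lemma tendsto_measureReal_conv_Ioi_div {ρ σ : Measure ℝ} [IsProbabilityMeasure ρ]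
    [IsProbabilityMeasure σ] (hF : F (Iio 0) = 0) (hρ : ρ (Iio 0) = 0) (hσ : σ (Iio 0) = 0)
    (hFpos : ∀ u, F (Ioi u) ≠ 0)
    (hF2 : Tendsto (fun u => (F.conv F).real (Ioi u) / F.real (Ioi u)) atTop (𝓝 2))
    {c₁ c₂ : ℝ} (hρF : Tendsto (fun u => ρ.real (Ioi u) / F.real (Ioi u)) atTop (𝓝 c₁))
    (hσF : Tendsto (fun u => σ.real (Ioi u) / F.real (Ioi u)) atTop (𝓝 c₂)) :
    Tendsto (fun u => (ρ.conv σ).real (Ioi u) / F.real (Ioi u)) atTop (𝓝 (c₁ + c₂)) := by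
  have hpos : ∀ u, 0 < F.real (Ioi u) := fun u => ENNReal.toReal_pos (hFpos u) (measure_ne_top _ _)
  obtain ⟨K₁, hK₁, hρK⟩ := exists_eventually_forall_ge_le_mul_of_tendsto_div hpos hρF
  obtain ⟨K₂, hK₂, hσK⟩ := exists_eventually_forall_ge_le_mul_of_tendsto_div hpos hσF
  refine tendsto_of_eventually_bounds (lt := atTop)
    (g := fun t u => ρ.real (Iic t) * (σ.real (Ioi u) / F.real (Ioi u))
      + ρ.real (Ioi u) / F.real (Ioi u) * σ.real (Iic t))
    (h := fun t u => σ.real (Ioi (u - t)) / F.real (Ioi u) + ρ.real (Ioi (u - t)) / F.real (Ioi u)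
      + K₁ * K₂ * ((F.conv F).real (Ioi u) / F.real (Ioi u) - 2 * F.real (Iic t)))
    (G := fun t => ρ.real (Iic t) * c₂ + c₁ * σ.real (Iic t))
    (H := fun t => c₂ + c₁ + K₁ * K₂ * (2 - 2 * F.real (Iic t))) ?_ ?_ ?_ ?_
  · convert ((tendsto_measureReal_Iic_atTop ρ).mul_const c₂).add
      ((tendsto_measureReal_Iic_atTop σ).const_mul c₁) using 2
    ring
  · convert tendsto_const_nhds.add
      ((((tendsto_measureReal_Iic_atTop F).const_mul 2).const_sub 2).const_mul (K₁ * K₂)) using 2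
    ring
  · filter_upwards with t
    refine ⟨(hσF.const_mul _).add (hρF.mul_const _), ?_⟩
    filter_upwards [eventually_gt_atTop t] with u htu
    rw [mul_div_assoc', div_mul_eq_mul_div, ← add_div]
    gcongr
    linarith [measureReal_conv_Ioi_ge hρ hσ htu, measureReal_nonneg (μ := ρ.prod σ)
      (s := bothLarge t u)]
  · filter_upwards [eventually_ge_atTop 0, hρK, hσK] with t ht hρt hσt
    have hlong := tendsto_measureReal_Ioi_sub_div hF hFpos hF2 ht
    refine ⟨((tendsto_comp_sub_div_of_tendsto_div (fun u => (hpos u).ne') hσF hlong).add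
      (tendsto_comp_sub_div_of_tendsto_div (fun u => (hpos u).ne') hρF hlong)).add
      ((hF2.sub_const (2 * F.real (Iic t))).const_mul (K₁ * K₂)), ?_⟩
    filter_upwards [eventually_gt_atTop t] with u htu
    have h := measureReal_conv_Ioi_le_of_tail_le hF hK₁ hK₂ hρt hσt htu
    have := (hpos u).ne'
    rw [div_le_iff₀ (hpos u)]
    refine h.trans_eq ?_
    field_simp

lemma tendsto_measureReal_convPow_Ioi_div {A : Measure ℝ} [IsProbabilityMeasure A]
    (hF : F (Iio 0) = 0) (hA : A (Iio 0) = 0) (hFpos : ∀ u, F (Ioi u) ≠ 0)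
    (hF2 : Tendsto (fun u => (F.conv F).real (Ioi u) / F.real (Ioi u)) atTop (𝓝 2)) {a : ℝ}
    (hAF : Tendsto (fun u => A.real (Ioi u) / F.real (Ioi u)) atTop (𝓝 a)) {n : ℕ} (hn : 1 ≤ n) :
    Tendsto (fun u => (convPow A n).real (Ioi u) / F.real (Ioi u)) atTop (𝓝 (n * a)) := by
  induction n, hn using Nat.le_induction with
  | base => simpa [convPow_one] using hAF
  | succ n hn ih =>
    rw [convPow, Nat.cast_succ, add_one_mul]
    exact tendsto_measureReal_conv_Ioi_div hF (convPow_Iio_zero_eq_zero A hA n) hA hFpos hF2 ih hAF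

end Asymptotics

/-- The subexponential class is closed under tail-equivalence:
if `1-A(u) ~ a (1-F(u))` with `a > 0` and `F` subexponential, so is `A`. -/
theorem subexponential_tail_equivalence
    (F A : Measure ℝ) [IsProbabilityMeasure F] [IsProbabilityMeasure A]
    (hFsupp : F (Set.Iio 0) = 0) (hAsupp : A (Set.Iio 0) = 0)
    (hFpos : ∀ u : ℝ, F (Set.Ioi u) ≠ 0)
    (a : ℝ) (ha : 0 < a)
    (htail : Tendsto (fun u => (A (Set.Ioi u)).toReal /
        (a * (F (Set.Ioi u)).toReal)) atTop (nhds 1))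
    (hFsub : Subexponential F) :
    Subexponential A := by
  have hAF : Tendsto (fun u => A.real (Ioi u) / F.real (Ioi u)) atTop (𝓝 a) := by
    refine (mul_one a ▸ htail.const_mul a).congr fun u => ?_
    rw [mul_div_assoc', mul_div_mul_left _ _ ha.ne']
    rfl
  have hF2 : Tendsto (fun u => (F.conv F).real (Ioi u) / F.real (Ioi u)) atTop (𝓝 2) := by
    have h := hFsub 2 one_le_two
    rwa [convPow, convPow_one, Nat.cast_ofNat] at h
  intro n hn
  have h := (tendsto_measureReal_convPow_Ioi_div hFsupp hAsupp hFpos hF2 hAF hn).div hAF ha.ne'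
  rw [mul_div_cancel_right₀ _ ha.ne'] at h
  refine h.congr fun u => div_div_div_cancel_right₀ ?_ _ _
  exact (ENNReal.toReal_pos (hFpos u) (measure_ne_top _ _)).ne'
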